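/- arXiv:2510.02147 — 3 statements merged into one kernel-verified Lean document; each statement's English description precedes it below -/
import Mathlib

section
/- Let p be an odd prime, η ∈ {+1, −1}, n ≥ 1 an integer, let R₀ be a commutative ring, and let R be a commutative R₀-algebra containing an element i with i² = −1. Write c := η·(−1)^{(p−1)/2} ∈ {+1, −1} and let s := 1 if c = 1 and s := i if c = −1. Then there is an isomorphism of R-algebras R ⊗_{R₀} T^η_{n,R₀} ≅ T_{n,R} sending 1 ⊗ ξ_r to c^{r+1}·s·τ_r for every 1 ≤ r ≤ n−1 (equivalently, sending c^r·s ⊗ ξ_r to τ_r). -/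
/-!
Statement 1: For an odd prime `p`, a sign `η ∈ {1, -1}`, `n ≥ 1`, a commutative ring `R₀` and a
commutative `R₀`-algebra `R` containing a square root `im` of `-1`, write
`c₀ := η·(-1)^((p-1)/2) ∈ R₀`, let `c` be the image of `c₀` in `R`, and let `s := 1` if `c = 1`
and `s := im` if `c = -1`.  Then there is an `R`-algebra isomorphism
`R ⊗_{R₀} T^η_{n,R₀} ≅ T_{n,R}` sending `1 ⊗ ξ_r` to `c^(r+1)·s·τ_r` for `1 ≤ r ≤ n-1`.

Both twisted group algebras are realised as quotients of the free algebra on `n - 1` generators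
(indexed by `Fin (n-1)`, where `i : Fin (n-1)` corresponds to the classical 1-based label
`r = i + 1`) by the defining relations, `T^η_{n,R₀}` with parameter `c₀ = η(-1)^((p-1)/2)`
and `T_{n,R}` with parameter `1`.
-/

open FreeAlgebra TensorProduct

/-- The defining relations of the twisted group algebra of `S_n` with parameter `c`:
`τ_r² = c`, `τ_r τ_s = -τ_s τ_r` for `|r - s| > 1`, and `(τ_r τ_{r+1})³ = 1`. -/
inductive TwistedGroupRel (R : Type*) [CommRing R] (n : ℕ) (c : R) :
    FreeAlgebra R (Fin (n - 1)) → FreeAlgebra R (Fin (n - 1)) → Prop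
  | square (r : Fin (n - 1)) :
      TwistedGroupRel R n c (ι R r * ι R r) (algebraMap R (FreeAlgebra R (Fin (n - 1))) c)
  | far_comm (r s : Fin (n - 1)) (h : (r : ℕ) + 1 < (s : ℕ) ∨ (s : ℕ) + 1 < (r : ℕ)) :
      TwistedGroupRel R n c (ι R r * ι R s) (-(ι R s * ι R r))
  | braid (r s : Fin (n - 1)) (h : (s : ℕ) = (r : ℕ) + 1) :
      TwistedGroupRel R n c ((ι R r * ι R s) ^ 3) 1

/-- The twisted group algebra of `S_n` over `R` with parameter `c`.  For `c = 1` this is the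
twisted group algebra `T_{n,R}`; for `c = η(-1)^((p-1)/2)` it is the `η`-twisted group
algebra `T^η_{n,R}`. -/
abbrev TwistedGroupAlgebra (R : Type*) [CommRing R] (n : ℕ) (c : R) :=
  RingQuot (TwistedGroupRel R n c)

/-- The generator of the twisted group algebra indexed by `r : Fin (n-1)`
(classically, the generator `τ_{r+1}`). -/
noncomputable def twistedGen (R : Type*) [CommRing R] (n : ℕ) (c : R) (r : Fin (n - 1)) :
    TwistedGroupAlgebra R n c :=
  RingQuot.mkAlgHom R (TwistedGroupRel R n c) (ι R r)

/-!
The isomorphism is a base change `R ⊗[R₀] T(R₀, c₀) ≅ T(R, c)` followed by a rescaling of the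
generators. Since `c² = 1` and `s² = c`, the scalars `λ_r = c^(r+2) s` satisfy `λ_r² = c` and
`λ_r λ_(r+1) = c^(2r+5) s² = 1`, so the rescaled generators `λ_r τ_r` of `T(R, 1)` satisfy the
relations of `T(R, c)`; as the `λ_r` are units, `ξ_r ↦ λ_r τ_r` is an isomorphism.
-/

namespace TwistedGroupAlgebra

section Family

variable {S A B : Type*} [CommRing S] [Ring A] [Algebra S A] [Ring B] [Algebra S B]

structure IsTwistedFamily (n : ℕ) (c : S) (x : Fin (n - 1) → A) : Prop where
  mul_self : ∀ r, x r * x r = algebraMap S A c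
  mul_anticomm_of_far : ∀ r s : Fin (n - 1), (r : ℕ) + 1 < s ∨ (s : ℕ) + 1 < r →
    x r * x s = -(x s * x r)
  braid : ∀ r s : Fin (n - 1), (s : ℕ) = r + 1 → (x r * x s) ^ 3 = 1

variable (S) in
lemma isTwistedFamily_twistedGen (n : ℕ) (c : S) : IsTwistedFamily n c (twistedGen S n c) where
  mul_self r := by
    simp only [twistedGen]
    rw [← map_mul, RingQuot.mkAlgHom_rel S (TwistedGroupRel.square r), AlgHom.commutes]
  mul_anticomm_of_far r s h := by
    simp only [twistedGen]
    rw [← map_mul, RingQuot.mkAlgHom_rel S (TwistedGroupRel.far_comm r s h), map_neg, map_mul]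
  braid r s h := by
    simp only [twistedGen]
    rw [← map_mul, ← map_pow, RingQuot.mkAlgHom_rel S (TwistedGroupRel.braid r s h), map_one]

variable {n : ℕ} {c c' : S} {x : Fin (n - 1) → A}

lemma IsTwistedFamily.map (hx : IsTwistedFamily n c x) (f : A →ₐ[S] B) :
    IsTwistedFamily n c (fun r => f (x r)) where
  mul_self r := by rw [← map_mul, hx.mul_self, AlgHom.commutes]
  mul_anticomm_of_far r s h := by rw [← map_mul, hx.mul_anticomm_of_far r s h, map_neg, map_mul]
  braid r s h := by rw [← map_mul, ← map_pow, hx.braid r s h, map_one]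

lemma IsTwistedFamily.smul (hx : IsTwistedFamily n c' x) (a : Fin (n - 1) → S)
    (ha_sq : ∀ r, a r ^ 2 * c' = c)
    (ha_braid : ∀ r s : Fin (n - 1), (s : ℕ) = r + 1 → (a r * a s) ^ 3 = 1) :
    IsTwistedFamily n c (fun r => a r • x r) where
  mul_self r := by
    rw [smul_mul_smul_comm, hx.mul_self, Algebra.smul_def, ← map_mul, ← sq, ha_sq]
  mul_anticomm_of_far r s h := by
    rw [smul_mul_smul_comm, smul_mul_smul_comm, hx.mul_anticomm_of_far r s h, smul_neg,
      mul_comm]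
  braid r s h := by rw [smul_mul_smul_comm, smul_pow, hx.braid r s h, ha_braid r s h, one_smul]

lemma isTwistedFamily_algebraMap_iff {R₀ R : Type*} [CommRing R₀] [CommRing R] [Algebra R₀ R]
    [Algebra R₀ A] [Algebra R A] [IsScalarTower R₀ R A] {c₀ : R₀} {x : Fin (n - 1) → A} :
    IsTwistedFamily n (algebraMap R₀ R c₀) x ↔ IsTwistedFamily n c₀ x := by
  constructor <;> rintro ⟨h_sq, h_far, h_braid⟩ <;> refine ⟨fun r => ?_, h_far, h_braid⟩ <;>
    simp only [h_sq, ← IsScalarTower.algebraMap_apply]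

noncomputable def lift (hx : IsTwistedFamily n c x) : TwistedGroupAlgebra S n c →ₐ[S] A :=
  RingQuot.liftAlgHom S ⟨FreeAlgebra.lift S x, fun _ _ h => by
    induction h with
    | square r => simp [hx.mul_self r]
    | far_comm r s h => simp [hx.mul_anticomm_of_far r s h]
    | braid r s h => simp [hx.braid r s h]⟩

@[simp]
lemma lift_twistedGen (hx : IsTwistedFamily n c x) (r : Fin (n - 1)) :
    lift hx (twistedGen S n c r) = x r := by
  simp [lift, twistedGen]

lemma algHom_ext {f g : TwistedGroupAlgebra S n c →ₐ[S] A}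
    (h : ∀ r, f (twistedGen S n c r) = g (twistedGen S n c r)) : f = g :=
  RingQuot.ringQuot_ext' _ _ _ (FreeAlgebra.hom_ext (funext h))

end Family

noncomputable def baseChangeEquiv (R₀ R : Type*) [CommRing R₀] [CommRing R] [Algebra R₀ R]
    (n : ℕ) (c₀ : R₀) :
    R ⊗[R₀] TwistedGroupAlgebra R₀ n c₀ ≃ₐ[R] TwistedGroupAlgebra R n (algebraMap R₀ R c₀) :=
  AlgEquiv.ofAlgHom
    (Algebra.TensorProduct.lift (Algebra.ofId R _)
      (lift (isTwistedFamily_algebraMap_iff.mp (isTwistedFamily_twistedGen R n _)))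
      fun _ _ => by rw [Algebra.ofId_apply]; exact Algebra.commute_algebraMap_left _ _)
    (lift (isTwistedFamily_algebraMap_iff.mpr
      ((isTwistedFamily_twistedGen R₀ n c₀).map Algebra.TensorProduct.includeRight)))
    (algHom_ext fun r => by simp)
    (Algebra.TensorProduct.ext (Subsingleton.elim _ _) (algHom_ext fun r => by simp))

@[simp]
lemma baseChangeEquiv_one_tmul_twistedGen (R₀ R : Type*) [CommRing R₀] [CommRing R]
    [Algebra R₀ R] (n : ℕ) (c₀ : R₀) (r : Fin (n - 1)) :
    baseChangeEquiv R₀ R n c₀ (1 ⊗ₜ twistedGen R₀ n c₀ r) = twistedGen R n _ r := by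
  simp [baseChangeEquiv]

section Rescale

variable {S : Type*} [CommRing S] {n : ℕ} {c c' : S}

noncomputable def rescaleEquiv (a : Fin (n - 1) → Sˣ) (ha_sq : ∀ r, (a r : S) ^ 2 * c' = c)
    (ha_braid : ∀ r s : Fin (n - 1), (s : ℕ) = r + 1 → (a r * a s) ^ 3 = 1) :
    TwistedGroupAlgebra S n c ≃ₐ[S] TwistedGroupAlgebra S n c' :=
  AlgEquiv.ofAlgHom
    (lift ((isTwistedFamily_twistedGen S n c').smul (fun r => a r) ha_sq
      (fun r s h => by rw [← Units.val_mul, ← Units.val_pow_eq_pow_val, ha_braid r s h,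
        Units.val_one])))
    (lift ((isTwistedFamily_twistedGen S n c).smul (fun r => ((a r)⁻¹ : Sˣ))
      (fun r => by rw [← ha_sq r, ← mul_assoc, ← mul_pow, Units.inv_mul, one_pow, one_mul])
      (fun r s h => by rw [← Units.val_mul, ← Units.val_pow_eq_pow_val, ← mul_inv, inv_pow,
        ha_braid r s h, inv_one, Units.val_one])))
    (algHom_ext fun r => by simp [smul_smul])
    (algHom_ext fun r => by simp [smul_smul])

@[simp]
lemma rescaleEquiv_twistedGen (a : Fin (n - 1) → Sˣ) (ha_sq : ∀ r, (a r : S) ^ 2 * c' = c)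
    (ha_braid : ∀ r s : Fin (n - 1), (s : ℕ) = r + 1 → (a r * a s) ^ 3 = 1) (r : Fin (n - 1)) :
    rescaleEquiv a ha_sq ha_braid (twistedGen S n c r) = (a r : S) • twistedGen S n c' r := by
  simp [rescaleEquiv]

end Rescale

end TwistedGroupAlgebra

section Scalars

variable {R : Type*} [CommRing R] {c s : R}

lemma pow_mul_sq_eq (hc : c ^ 2 = 1) (hs : s ^ 2 = c) (k : ℕ) : (c ^ k * s) ^ 2 = c := by
  rw [mul_pow, ← pow_mul, mul_comm k 2, pow_mul, hc, one_pow, one_mul, hs]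

lemma pow_mul_mul_pow_succ_mul_eq_one (hc : c ^ 2 = 1) (hs : s ^ 2 = c) (k : ℕ) :
    c ^ k * s * (c ^ (k + 1) * s) = 1 := by
  rw [show c ^ k * s * (c ^ (k + 1) * s) = (c ^ 2) ^ k * (c * s ^ 2) by ring, hs, ← sq, hc,
    one_pow, one_mul]

end Scalars

theorem statement1_general (p : ℕ)
    (R₀ : Type*) [CommRing R₀] (R : Type*) [CommRing R] [Algebra R₀ R]
    (im : R) (him : im ^ 2 = -1)
    (η : R₀) (hη : η = 1 ∨ η = -1) (n : ℕ)
    (c₀ : R₀) (hc₀ : c₀ = η * (-1) ^ ((p - 1) / 2))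
    (c : R) (hc : c = algebraMap R₀ R c₀)
    (s : R) (hs_pos : c = 1 → s = 1) (hs_neg : c = -1 → s = im) :
    ∃ e : (R ⊗[R₀] TwistedGroupAlgebra R₀ n c₀) ≃ₐ[R] TwistedGroupAlgebra R n 1,
      ∀ r : Fin (n - 1),
        e ((1 : R) ⊗ₜ[R₀] twistedGen R₀ n c₀ r)
          = (c ^ ((r : ℕ) + 2) * s) • twistedGen R n 1 r := by
  have hc_sign : c = 1 ∨ c = -1 := by
    rcases neg_one_pow_eq_or R₀ ((p - 1) / 2) with h | h <;> rcases hη with rfl | rfl <;>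
      simp [hc, hc₀, h]
  have hc_sq : c ^ 2 = 1 := by rcases hc_sign with h | h <;> simp [h]
  have hs_sq : s ^ 2 = c := by
    rcases hc_sign with h | h
    · rw [hs_pos h, h, one_pow]
    · rw [hs_neg h, him, h]
  let a : Fin (n - 1) → Rˣ := fun r =>
    Units.mkOfMulEqOne _ _ (pow_mul_mul_pow_succ_mul_eq_one hc_sq hs_sq ((r : ℕ) + 2))
  have ha_sq : ∀ r, (a r : R) ^ 2 * 1 = c := fun r => by
    simp [a, pow_mul_sq_eq hc_sq hs_sq]
  have ha_braid : ∀ r t : Fin (n - 1), (t : ℕ) = r + 1 → (a r * a t) ^ 3 = 1 := fun r t h => by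
    ext
    simp [a, h, add_right_comm, pow_mul_mul_pow_succ_mul_eq_one hc_sq hs_sq]
  subst hc
  exact ⟨(TwistedGroupAlgebra.baseChangeEquiv R₀ R n c₀).trans
    (TwistedGroupAlgebra.rescaleEquiv a ha_sq ha_braid), fun r => by simp [a]⟩

theorem statement1 (p : ℕ) (hp : p.Prime) (hp_odd : Odd p)
    (R₀ : Type*) [CommRing R₀] (R : Type*) [CommRing R] [Algebra R₀ R]
    (im : R) (him : im ^ 2 = -1)
    (η : R₀) (hη : η = 1 ∨ η = -1) (n : ℕ) (hn : 1 ≤ n)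
    (c₀ : R₀) (hc₀ : c₀ = η * (-1) ^ ((p - 1) / 2))
    (c : R) (hc : c = algebraMap R₀ R c₀)
    (s : R) (hs_pos : c = 1 → s = 1) (hs_neg : c = -1 → s = im) :
    ∃ e : (R ⊗[R₀] TwistedGroupAlgebra R₀ n c₀) ≃ₐ[R] TwistedGroupAlgebra R n 1,
      ∀ r : Fin (n - 1),
        e ((1 : R) ⊗ₜ[R₀] twistedGen R₀ n c₀ r)
          = (c ^ ((r : ℕ) + 2) * s) • twistedGen R n 1 r :=
  statement1_general p R₀ R im him η hη n c₀ hc₀ c hc s hs_pos hs_neg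
end

section
/- Let p be a prime number, let O be a discrete valuation ring whose field of fractions K has characteristic 0 and whose residue field has characteristic p, and let G be a finite group. Let b = Σ_{g ∈ G} b_g·g be a central idempotent of the group algebra O[G], and suppose that the character of the K[G]-module K[G]b is rational-valued, i.e. for every g ∈ G the trace of the K-linear endomorphism x ↦ gx of the finite-dimensional K-vector space K[G]b lies in the image of ℚ in K. Then every coefficient b_g lies in the image of ℤ_{(p)} (the localization of ℤ at the prime p) under the inclusion ℚ ⊆ K; that is, b ∈ ℤ_{(p)}[G]. -/
/-!
Left multiplication by `g` on `K[G]b` is the restriction of `x ↦ g x b` to the image of the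
projection `x ↦ x b`, so its trace equals the trace of `x ↦ g x b` on all of `K[G]`, which in
the basis `G` is `∑_h b_{h⁻¹ g⁻¹ h}`. Since `b` is central its coefficients are class functions,
so `χ(g⁻¹) = |G| b_g`, and `b_g = χ(g⁻¹) / |G|` is rational. A rational number lying in `O` has
denominator prime to `p`: otherwise reducing `b_g · den = num` modulo the maximal ideal would
make `p` divide the numerator as well.
-/

/-- Left multiplication by the group element `g` on the right ideal `K[G]·bK`,
as a `K`-linear endomorphism. -/
noncomputable def leftMulOnIdeal (K : Type*) [Field K] (G : Type*) [Group G]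
    (bK : MonoidAlgebra K G) (g : G) :
    LinearMap.range (LinearMap.mulRight K bK) →ₗ[K]
      LinearMap.range (LinearMap.mulRight K bK) :=
  (LinearMap.mulLeft K (MonoidAlgebra.of K G g)).restrict (fun x hx => by
    rcases LinearMap.mem_range.mp hx with ⟨y, rfl⟩
    exact LinearMap.mem_range.mpr ⟨MonoidAlgebra.of K G g * y, by simp [mul_assoc]⟩)

open LinearMap MonoidAlgebra

theorem Rat.not_dvd_den_of_algebraMap_eq {O K : Type*} [CommRing O] [IsLocalRing O] [Field K]
    [CharZero K] [Algebra O K] (hinj : Function.Injective (algebraMap O K)) (p : ℕ)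
    [hp : CharP (IsLocalRing.ResidueField O) p] {x : O} {q : ℚ} (h : algebraMap O K x = q) :
    ¬ p ∣ q.den := by
  intro hdvd
  have hO : x * q.den = q.num := hinj <| by
    rw [map_mul, map_natCast, map_intCast, h]
    exact_mod_cast q.mul_den_eq_num
  have hnum : (p : ℤ) ∣ q.num := by
    rw [← CharP.intCast_eq_zero_iff (IsLocalRing.ResidueField O) p,
      ← map_intCast (IsLocalRing.residue O), ← hO, map_mul, map_natCast,
      (CharP.cast_eq_zero_iff _ p _).mpr hdvd, mul_zero]
  exact CharP.char_ne_one (IsLocalRing.ResidueField O) p <|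
    Nat.eq_one_of_dvd_coprimes q.reduced (Int.natCast_dvd.mp hnum) hdvd

theorem MonoidAlgebra.coeff_conj_eq_of_forall_mul_comm {R G : Type*} [Semiring R] [Group G]
    {b : MonoidAlgebra R G} (hb : ∀ a, a * b = b * a) (h x : G) :
    b.coeff (h⁻¹ * x * h) = b.coeff x := by
  simpa [mul_assoc] using (congrArg (coeff · (h⁻¹ * x)) (hb (single h⁻¹ 1))).symm

section

variable {K G : Type*} [Field K] [Group G] [Fintype G]

theorem MonoidAlgebra.trace_mulLeft_of_comp_mulRight (e : MonoidAlgebra K G) (g : G) :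
    trace K _ (mulLeft K (of K G g) ∘ₗ mulRight K e) = ∑ h : G, e.coeff (h⁻¹ * g⁻¹ * h) := by
  classical
  rw [trace_eq_matrix_trace K (MonoidAlgebra.basis G K), Matrix.trace]
  refine Finset.sum_congr rfl fun h _ => ?_
  simp only [Matrix.diag_apply, toMatrix_apply, basis_apply]
  change (single g 1 * (single h 1 * e)).coeff h = _
  simp [mul_assoc]

theorem trace_leftMulOnIdeal {e : MonoidAlgebra K G} (he : e * e = e) (g : G) :
    trace K _ (leftMulOnIdeal K G e g) = ∑ h : G, e.coeff (h⁻¹ * g⁻¹ * h) := by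
  have hmem : ∀ x, (mulLeft K (of K G g) ∘ₗ mulRight K e) x ∈ range (mulRight K e) :=
    fun x => ⟨of K G g * x, by simp [mul_assoc]⟩
  have hrestrict : (mulLeft K (of K G g) ∘ₗ mulRight K e).restrict (fun x _ => hmem x) =
      leftMulOnIdeal K G e g := by
    ext ⟨_, y, rfl⟩
    simp [leftMulOnIdeal, mul_assoc, he]
  rw [← hrestrict, trace_restrict_eq_of_forall_mem _ _ hmem, trace_mulLeft_of_comp_mulRight]

theorem trace_leftMulOnIdeal_inv_of_conj_invariant {e : MonoidAlgebra K G} (he : e * e = e)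
    (hconj : ∀ h x, e.coeff (h⁻¹ * x * h) = e.coeff x) (g : G) :
    trace K _ (leftMulOnIdeal K G e g⁻¹) = Fintype.card G * e.coeff g := by
  simp [trace_leftMulOnIdeal he, hconj]

end

theorem statement6_general (p : ℕ)
    (O : Type*) [CommRing O] [IsDomain O] [IsDiscreteValuationRing O]
    (K : Type*) [Field K] [CharZero K] [Algebra O K] [IsFractionRing O K]
    (hres : CharP (IsLocalRing.ResidueField O) p)
    (G : Type*) [Group G] [Fintype G]
    (b : MonoidAlgebra O G)
    (hb_central : b ∈ Subring.center (MonoidAlgebra O G))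
    (hb_idem : b * b = b)
    -- `bK` is the image of `b` in `K[G]` (coefficientwise)
    (bK : MonoidAlgebra K G)
    (hbK : bK = MonoidAlgebra.ofCoeff (Finsupp.mapRange (algebraMap O K) (map_zero _) b.coeff))
    -- the character of `K[G]b` is rational valued: for every `g ∈ G` the trace of left
    -- multiplication by `g` on `K[G]·bK` lies in the image of `ℚ` in `K`
    (hχ : ∀ g : G, ∃ q : ℚ,
        LinearMap.trace K (LinearMap.range (LinearMap.mulRight K bK))
          (leftMulOnIdeal K G bK g) = (q : K)) :
    ∀ g : G, ∃ q : ℚ, ¬ (p ∣ q.den) ∧ algebraMap O K (b.coeff g) = (q : K) := by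
  intro g
  replace hbK : bK = mapRingHom G (algebraMap O K) b := hbK
  have hidem : bK * bK = bK := by rw [hbK, ← map_mul, hb_idem]
  have hconj : ∀ h x, bK.coeff (h⁻¹ * x * h) = bK.coeff x := fun h x => by
    simp only [hbK, coeff_mapRingHom,
      coeff_conj_eq_of_forall_mul_comm (Subring.mem_center_iff.mp hb_central)]
  obtain ⟨q, hq⟩ := hχ g⁻¹
  rw [trace_leftMulOnIdeal_inv_of_conj_invariant hidem hconj, hbK, coeff_mapRingHom] at hq
  have hcoeff : algebraMap O K (b.coeff g) = ((q / Fintype.card G : ℚ) : K) := by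
    rw [Rat.cast_div, Rat.cast_natCast, ← hq]
    field_simp
  exact ⟨_, Rat.not_dvd_den_of_algebraMap_eq (IsFractionRing.injective O K) p (hp := hres) hcoeff,
    hcoeff⟩

theorem statement6 (p : ℕ) (hp : p.Prime)
    (O : Type*) [CommRing O] [IsDomain O] [IsDiscreteValuationRing O]
    (K : Type*) [Field K] [CharZero K] [Algebra O K] [IsFractionRing O K]
    (hres : CharP (IsLocalRing.ResidueField O) p)
    (G : Type*) [Group G] [Fintype G]
    (b : MonoidAlgebra O G)
    (hb_central : b ∈ Subring.center (MonoidAlgebra O G))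
    (hb_idem : b * b = b)
    -- `bK` is the image of `b` in `K[G]` (coefficientwise)
    (bK : MonoidAlgebra K G)
    (hbK : bK = MonoidAlgebra.ofCoeff (Finsupp.mapRange (algebraMap O K) (map_zero _) b.coeff))
    -- the character of `K[G]b` is rational valued: for every `g ∈ G` the trace of left
    -- multiplication by `g` on `K[G]·bK` lies in the image of `ℚ` in `K`
    (hχ : ∀ g : G, ∃ q : ℚ,
        LinearMap.trace K (LinearMap.range (LinearMap.mulRight K bK))
          (leftMulOnIdeal K G bK g) = (q : K)) :
    ∀ g : G, ∃ q : ℚ, ¬ (p ∣ q.den) ∧ algebraMap O K (b.coeff g) = (q : K) :=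
  statement6_general p O K hres G b hb_central hb_idem bK hbK hχ
end

section
/- Let R be a commutative ring and R' a commutative R-algebra. Let A be an R-algebra, A₀ ⊆ A an R-subalgebra, and u ∈ A a unit such that A = A₀ ⊕ A₀u as R-modules, u·A₀ = A₀·u, and u² ∈ A₀ (so that A is a ℤ/2-graded R-algebra with even part A₀ and odd part A₀u, and u is an odd unit). Set A' := R' ⊗_R A, let A'₀ denote the image of R' ⊗_R A₀ in A' (so A'₀ ≅ R' ⊗_R A₀, since A₀ is an R-module direct summand of A), and set u' := 1 ⊗ u ∈ A'. Let U' be an A'-module equipped with A'₀-submodules U'₀ and U'₁ such that U' = U'₀ ⊕ U'₁, u'·U'₀ ⊆ U'₁, and u'·U'₁ ⊆ U'₀. If there exists an A₀-module U₀ and an isomorphism of A'₀-modules U'₀ ≅ R' ⊗_R U₀, then there exist an A-module U, A₀-submodules V₀ and V₁ of U with U = V₀ ⊕ V₁, u·V₀ ⊆ V₁ and u·V₁ ⊆ V₀, and an isomorphism of A'-modules R' ⊗_R U ≅ U' carrying the image of R' ⊗_R V₀ onto U'₀ and the image of R' ⊗_R V₁ onto U'₁. -/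
/-!
Write `σ(x) = u⁻¹ x u` for conjugation on `A₀`. Every `a ∈ A` is uniquely `p + u q` with
`p, q ∈ A₀`, and the rule `(p + u q)(v + u w) = (p v + u² σ(q) w) + u (q v + σ(p) w)` makes
`U := U₀ × U₀` an `A`-module, graded by its two factors (it is the module induced from `U₀`).
On the other side, `u' = 1 ⊗ u` acts invertibly on `U'` and exchanges `U'₀` and `U'₁`, so it
restricts to an isomorphism `U'₀ ≅ U'₁`. Hence
`R' ⊗ U ≅ (R' ⊗ U₀)² ≅ U'₀ × U'₀ ≅ U'₀ ⊕ U'₁ = U'`, `r ⊗ (v, w) ↦ e (r ⊗ v) + u' e (r ⊗ w)`,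
and its `A'`-linearity is the same multiplication rule read in `U'`.
-/

open TensorProduct

/-- A bundle consisting of a module over the subalgebra `A₀` (an "`A₀`-module"),
together with its underlying compatible `R`-module structure. -/
structure ModuleOverWitness (R : Type) [CommRing R] {A : Type} [Ring A] [Algebra R A]
    (A₀ : Subalgebra R A) : Type 1 where
  carrier : Type
  [addCommGroup : AddCommGroup carrier]
  [moduleR : Module R carrier]
  [moduleA₀ : Module A₀ carrier]
  [tower : IsScalarTower R A₀ carrier]

attribute [instance] ModuleOverWitness.addCommGroup ModuleOverWitness.moduleR
  ModuleOverWitness.moduleA₀ ModuleOverWitness.tower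

/-- A bundle consisting of an `A`-module together with its underlying compatible
`R`-module structure. -/
structure ModuleWitness (R : Type) [CommRing R] (A : Type) [Ring A] [Algebra R A] :
    Type 1 where
  carrier : Type
  [addCommGroup : AddCommGroup carrier]
  [moduleR : Module R carrier]
  [moduleA : Module A carrier]
  [tower : IsScalarTower R A carrier]

attribute [instance] ModuleWitness.addCommGroup ModuleWitness.moduleR
  ModuleWitness.moduleA ModuleWitness.tower

theorem Submodule.map_eq_of_isCompl_of_map_le {R M : Type*} [Ring R] [AddCommGroup M] [Module R M]
    {p q : Submodule R M} (hpq : IsCompl p q) (f : M ≃ₗ[R] M) (hp : p.map f.toLinearMap ≤ q)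
    (hq : q.map f.toLinearMap ≤ p) : p.map f.toLinearMap = q := by
  refine le_antisymm hp fun z hz => ?_
  obtain ⟨y, hy, y', hy', hyy'⟩ := Submodule.mem_sup.mp (hpq.sup_eq_top ▸ Submodule.mem_top :
    f.symm z ∈ p ⊔ q)
  have hfy' : f y' ∈ p ⊓ q := by
    refine ⟨hq ⟨y', hy', rfl⟩, ?_⟩
    have : f y' = z - f y := by rw [← f.apply_symm_apply z, ← hyy', map_add]; abel
    exact this ▸ q.sub_mem hz (hp ⟨y, hy, rfl⟩)
  rw [hpq.inf_eq_bot, Submodule.mem_bot, LinearEquiv.map_eq_zero_iff] at hfy'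
  refine ⟨y, hy, ?_⟩
  rw [← f.apply_symm_apply z, ← hyy', hfy', add_zero]
  rfl

theorem Submodule.baseChange_range {R A M N : Type*} [CommSemiring R] [Semiring A] [Algebra R A]
    [AddCommMonoid M] [Module R M] [AddCommMonoid N] [Module R N] (f : N →ₗ[R] M) :
    (LinearMap.range f).baseChange A = LinearMap.range (f.baseChange A) := by
  rw [Submodule.baseChange, ← LinearMap.range_comp_of_range_eq_top _
    (LinearMap.range_eq_top_of_surjective _ (f.rangeRestrict.baseChange_surjective A
      f.surjective_rangeRestrict)), ← LinearMap.baseChange_comp,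
    LinearMap.subtype_comp_codRestrict]

theorem Submodule.map_baseChange_range_eq {R A M N P : Type*} [CommSemiring R] [Semiring A]
    [Algebra R A] [AddCommMonoid M] [Module R M] [AddCommMonoid N] [Module R N]
    [AddCommMonoid P] [Module A P] {f : N →ₗ[R] M} {g : A ⊗[R] M →ₗ[A] P} {p : Submodule A P}
    (φ : A ⊗[R] N ≃ₗ[A] p) (hg : g ∘ₗ f.baseChange A = p.subtype ∘ₗ φ.toLinearMap) :
    ((LinearMap.range f).baseChange A).map g = p := by
  rw [Submodule.baseChange_range, ← LinearMap.range_comp, hg, LinearMap.range_comp,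
    LinearEquiv.range, Submodule.map_top, Submodule.range_subtype]

structure IsSuperunit {R A : Type} [CommRing R] [Ring A] [Algebra R A]
    (A₀ : Subalgebra R A) (u : Aˣ) : Prop where
  isCompl : IsCompl (Subalgebra.toSubmodule A₀)
    ((Subalgebra.toSubmodule A₀).map (LinearMap.mulRight R (u : A)))
  map_mulLeft_eq : (Subalgebra.toSubmodule A₀).map (LinearMap.mulLeft R (u : A))
    = (Subalgebra.toSubmodule A₀).map (LinearMap.mulRight R (u : A))
  mul_self_mem : (u : A) * u ∈ A₀

namespace IsSuperunit

variable {R A : Type} [CommRing R] [Ring A] [Algebra R A] {A₀ : Subalgebra R A} {u : Aˣ}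
  (h : IsSuperunit A₀ u)
include h

theorem inv_mul_mul_mem {x : A} (hx : x ∈ A₀) : (↑u⁻¹ : A) * x * u ∈ A₀ := by
  obtain ⟨y, hy, hyx⟩ : x * u ∈ (Subalgebra.toSubmodule A₀).map (LinearMap.mulLeft R (u : A)) :=
    h.map_mulLeft_eq ▸ ⟨x, hx, rfl⟩
  rwa [mul_assoc, ← hyx, LinearMap.mulLeft_apply, Units.inv_mul_cancel_left]

def conj : A₀ →ₐ[R] A₀ where
  toFun x := ⟨↑u⁻¹ * x * u, h.inv_mul_mul_mem x.2⟩
  map_one' := by ext; simp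
  map_mul' x y := by ext; simp [mul_assoc]
  map_zero' := by ext; simp
  map_add' x y := by ext; simp [mul_add, add_mul]
  commutes' r := by ext; simp [Algebra.algebraMap_eq_smul_one]

theorem coe_conj (x : A₀) : (h.conj x : A) = ↑u⁻¹ * x * u := rfl

theorem mul_conj (x : A₀) : (u : A) * h.conj x = x * u := by
  simp [coe_conj, ← mul_assoc]

def unitSq : A₀ := ⟨u * u, h.mul_self_mem⟩

theorem conj_unitSq : h.conj h.unitSq = h.unitSq := by
  ext; simp [coe_conj, unitSq, ← mul_assoc]

theorem unitSq_mul_conj_conj (x : A₀) : h.unitSq * h.conj (h.conj x) = x * h.unitSq := by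
  ext; simp [coe_conj, unitSq, ← mul_assoc]

theorem isCompl_mulLeft : IsCompl (Subalgebra.toSubmodule A₀)
    ((Subalgebra.toSubmodule A₀).map (LinearMap.mulLeft R (u : A))) :=
  h.map_mulLeft_eq ▸ h.isCompl

noncomputable def evenOddEquiv : (A₀ × A₀) ≃ₗ[R] A :=
  ((A₀.toSubmoduleEquiv.symm.prodCongr ((A₀.toSubmoduleEquiv.symm).trans
    (Submodule.equivMapOfInjective _ u.isUnit.mul_right_injective _))).trans
    (Submodule.prodEquivOfIsCompl _ _ h.isCompl_mulLeft))

theorem evenOddEquiv_apply (p q : A₀) : h.evenOddEquiv (p, q) = p + u * q := rfl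

theorem evenOddEquiv_mul (p q p' q' : A₀) :
    h.evenOddEquiv (p, q) * h.evenOddEquiv (p', q')
      = h.evenOddEquiv (p * p' + h.unitSq * h.conj q * q', h.conj p * q' + q * p') := by
  have hp : (p : A) * u = u * h.conj p := (h.mul_conj p).symm
  have hq : (q : A) * u = u * h.conj q := (h.mul_conj q).symm
  simp only [evenOddEquiv_apply, unitSq, Subalgebra.coe_add, Subalgebra.coe_mul]
  calc ((p : A) + u * q) * (p' + u * q')
      = p * p' + (p * u) * q' + u * (q * p') + u * ((q * u) * q') := by noncomm_ring
    _ = _ := by rw [hp, hq]; noncomm_ring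

theorem evenOddEquiv_symm_one : h.evenOddEquiv.symm 1 = (1, 0) := by
  rw [LinearEquiv.symm_apply_eq, evenOddEquiv_apply]; simp

theorem evenOddEquiv_symm_coe (x : A₀) : h.evenOddEquiv.symm x = (x, 0) := by
  rw [LinearEquiv.symm_apply_eq, evenOddEquiv_apply]; simp

theorem evenOddEquiv_symm_unit : h.evenOddEquiv.symm u = (0, 1) := by
  rw [LinearEquiv.symm_apply_eq, evenOddEquiv_apply]; simp

section Module

variable {M : Type} [AddCommGroup M] [Module A₀ M]

/-- The pair `(v, w)` stands for `v + u w` and `(p, q)` for `p + u q`. -/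
def pairSMul (pq : A₀ × A₀) (x : M × M) : M × M :=
  (pq.1 • x.1 + (h.unitSq * h.conj pq.2) • x.2, pq.2 • x.1 + h.conj pq.1 • x.2)

theorem pairSMul_pairSMul (p q p' q' : A₀) (x : M × M) :
    h.pairSMul (p, q) (h.pairSMul (p', q') x)
      = h.pairSMul (p * p' + h.unitSq * h.conj q * q', h.conj p * q' + q * p') x := by
  have hsq (y : A₀) (m : M) : h.unitSq • h.conj (h.conj y) • m = y • h.unitSq • m := by
    rw [← mul_smul, ← mul_smul, unitSq_mul_conj_conj]
  simp only [pairSMul, map_add, map_mul, conj_unitSq, smul_add, add_smul, mul_smul, hsq]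
  ext <;> dsimp only <;> abel

theorem pairSMul_add_left (pq pq' : A₀ × A₀) (x : M × M) :
    h.pairSMul (pq + pq') x = h.pairSMul pq x + h.pairSMul pq' x := by
  simp only [pairSMul, Prod.fst_add, Prod.snd_add, map_add, mul_add, add_smul]
  ext <;> dsimp only [Prod.fst_add, Prod.snd_add] <;> abel

theorem pairSMul_add_right (pq : A₀ × A₀) (x y : M × M) :
    h.pairSMul pq (x + y) = h.pairSMul pq x + h.pairSMul pq y := by
  simp only [pairSMul, Prod.fst_add, Prod.snd_add, smul_add]
  ext <;> dsimp only [Prod.fst_add, Prod.snd_add] <;> abel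

noncomputable abbrev superModule : Module A (M × M) where
  smul a x := h.pairSMul (h.evenOddEquiv.symm a) x
  one_smul x := by
    show h.pairSMul _ x = x
    simp [evenOddEquiv_symm_one, pairSMul]
  mul_smul a b x := by
    obtain ⟨⟨p, q⟩, rfl⟩ := h.evenOddEquiv.surjective a
    obtain ⟨⟨p', q'⟩, rfl⟩ := h.evenOddEquiv.surjective b
    show h.pairSMul _ x = h.pairSMul _ (h.pairSMul _ x)
    simp only [evenOddEquiv_mul, LinearEquiv.symm_apply_apply, pairSMul_pairSMul]
  smul_zero a := by
    show h.pairSMul _ 0 = 0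
    simp [pairSMul]
  smul_add a x y := h.pairSMul_add_right _ x y
  add_smul a b x := by
    show h.pairSMul _ x = h.pairSMul _ x + h.pairSMul _ x
    rw [map_add, pairSMul_add_left]
  zero_smul x := by
    show h.pairSMul _ x = 0
    simp [pairSMul]

theorem coe_smul_eq (x : A₀) (m : M × M) :
    letI := h.superModule (M := M); (x : A) • m = (x • m.1, h.conj x • m.2) := by
  show h.pairSMul _ m = _
  simp [evenOddEquiv_symm_coe, pairSMul]

theorem unit_smul_eq (m : M × M) :
    letI := h.superModule (M := M); (u : A) • m = (h.unitSq • m.2, m.1) := by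
  show h.pairSMul _ m = _
  simp [evenOddEquiv_symm_unit, pairSMul]

variable [Module R M]

theorem coe_smul_mem_range_inl {a : A} (ha : a ∈ A₀) {x : M × M}
    (hx : x ∈ LinearMap.range (LinearMap.inl R M M)) :
    letI := h.superModule (M := M); a • x ∈ LinearMap.range (LinearMap.inl R M M) := by
  obtain ⟨m, rfl⟩ := hx
  exact ⟨(⟨a, ha⟩ : A₀) • m, by simp [h.coe_smul_eq ⟨a, ha⟩]⟩

theorem coe_smul_mem_range_inr {a : A} (ha : a ∈ A₀) {x : M × M}
    (hx : x ∈ LinearMap.range (LinearMap.inr R M M)) :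
    letI := h.superModule (M := M); a • x ∈ LinearMap.range (LinearMap.inr R M M) := by
  obtain ⟨m, rfl⟩ := hx
  exact ⟨h.conj ⟨a, ha⟩ • m, by simp [h.coe_smul_eq ⟨a, ha⟩]⟩

theorem unit_smul_mem_range_inr {x : M × M} (hx : x ∈ LinearMap.range (LinearMap.inl R M M)) :
    letI := h.superModule (M := M); (u : A) • x ∈ LinearMap.range (LinearMap.inr R M M) := by
  obtain ⟨m, rfl⟩ := hx
  exact ⟨m, by simp [h.unit_smul_eq]⟩

theorem unit_smul_mem_range_inl {x : M × M} (hx : x ∈ LinearMap.range (LinearMap.inr R M M)) :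
    letI := h.superModule (M := M); (u : A) • x ∈ LinearMap.range (LinearMap.inl R M M) := by
  obtain ⟨m, rfl⟩ := hx
  exact ⟨h.unitSq • m, by simp [h.unit_smul_eq]⟩

variable [IsScalarTower R A₀ M]

theorem pairSMul_smul (r : R) (pq : A₀ × A₀) (x : M × M) :
    h.pairSMul (r • pq) x = r • h.pairSMul pq x := by
  simp [pairSMul, smul_assoc]

theorem superModule_isScalarTower :
    letI := h.superModule (M := M); IsScalarTower R A (M × M) :=
  letI := h.superModule (M := M)
  ⟨fun r a x => by
    show h.pairSMul _ x = r • h.pairSMul _ x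
    rw [map_smul, pairSMul_smul]⟩

end Module

end IsSuperunit

section Descent

variable {R A : Type} [CommRing R] [Ring A] [Algebra R A] (u : Aˣ)
  {R' : Type} [CommRing R'] [Algebra R R']
  {U' : Type} [AddCommGroup U'] [Module R' U'] [Module (R' ⊗[R] A) U']
  [IsScalarTower R' (R' ⊗[R] A) U']
  {U'₀ U'₁ : Submodule R' U'} (hU' : IsCompl U'₀ U'₁)
  (hu'01 : ∀ w ∈ U'₀, ((1 : R') ⊗ₜ[R] (u : A) : R' ⊗[R] A) • w ∈ U'₁)
  (hu'10 : ∀ w ∈ U'₁, ((1 : R') ⊗ₜ[R] (u : A) : R' ⊗[R] A) • w ∈ U'₀)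

noncomputable def oddEquiv : U'₀ ≃ₗ[R'] U'₁ :=
  let u' := Units.map (Algebra.TensorProduct.includeRight : A →ₐ[R] R' ⊗[R] A).toMonoidHom u
  ((DistribMulAction.toLinearEquiv R' U' u').submoduleMap U'₀).trans
    (LinearEquiv.ofEq _ _ (Submodule.map_eq_of_isCompl_of_map_le hU' _
      (Submodule.map_le_iff_le_comap.mpr hu'01) (Submodule.map_le_iff_le_comap.mpr hu'10)))

theorem coe_oddEquiv (w : U'₀) :
    (oddEquiv u hU' hu'01 hu'10 w : U') = ((1 : R') ⊗ₜ[R] (u : A) : R' ⊗[R] A) • (w : U') := rfl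

variable {M : Type} [AddCommGroup M] [Module R M] (e : (R' ⊗[R] M) ≃ₗ[R'] U'₀)

noncomputable def descentEquiv : (R' ⊗[R] (M × M)) ≃ₗ[R'] U' :=
  (TensorProduct.prodRight R R' R' M M).trans
    ((e.prodCongr (e.trans (oddEquiv u hU' hu'01 hu'10))).trans
      (Submodule.prodEquivOfIsCompl U'₀ U'₁ hU'))

theorem descentEquiv_tmul (r : R') (x : M × M) :
    descentEquiv u hU' hu'01 hu'10 e (r ⊗ₜ x)
      = e (r ⊗ₜ x.1) + ((1 : R') ⊗ₜ[R] (u : A) : R' ⊗[R] A) • (e (r ⊗ₜ x.2) : U') := rfl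

theorem descentEquiv_comp_baseChange_inl :
    (descentEquiv u hU' hu'01 hu'10 e).toLinearMap ∘ₗ (LinearMap.inl R M M).baseChange R'
      = U'₀.subtype ∘ₗ e.toLinearMap :=
  LinearMap.ext fun t => t.induction_on (by simp) (fun r m => by simp [descentEquiv_tmul])
    (fun _ _ h₁ h₂ => by simp only [map_add, h₁, h₂])

theorem descentEquiv_comp_baseChange_inr :
    (descentEquiv u hU' hu'01 hu'10 e).toLinearMap ∘ₗ (LinearMap.inr R M M).baseChange R'
      = U'₁.subtype ∘ₗ (e.trans (oddEquiv u hU' hu'01 hu'10)).toLinearMap :=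
  LinearMap.ext fun t => t.induction_on (by simp)
    (fun r m => by simp [descentEquiv_tmul, coe_oddEquiv])
    (fun _ _ h₁ h₂ => by simp only [map_add, h₁, h₂])

end Descent

namespace IsSuperunit

variable {R A : Type} [CommRing R] [Ring A] [Algebra R A] {A₀ : Subalgebra R A} {u : Aˣ}
  (h : IsSuperunit A₀ u) {R' : Type} [CommRing R'] [Algebra R R']
include h

theorem tmul_evenOddEquiv (x : R') (p q : A₀) :
    (x ⊗ₜ[R] h.evenOddEquiv (p, q) : R' ⊗[R] A)
      = x ⊗ₜ (p : A) + ((1 : R') ⊗ₜ[R] (u : A)) * (x ⊗ₜ (q : A)) := by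
  rw [evenOddEquiv_apply, tmul_add, Algebra.TensorProduct.tmul_mul_tmul, one_mul]

variable {U' : Type} [AddCommGroup U'] [Module R' U'] [Module (R' ⊗[R] A) U']
  [IsScalarTower R' (R' ⊗[R] A) U']
  {U'₀ U'₁ : Submodule R' U'} (hU' : IsCompl U'₀ U'₁)
  (hu'01 : ∀ w ∈ U'₀, ((1 : R') ⊗ₜ[R] (u : A) : R' ⊗[R] A) • w ∈ U'₁)
  (hu'10 : ∀ w ∈ U'₁, ((1 : R') ⊗ₜ[R] (u : A) : R' ⊗[R] A) • w ∈ U'₀)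
  {M : Type} [AddCommGroup M] [Module R M] [Module A₀ M]
  {e : (R' ⊗[R] M) ≃ₗ[R'] U'₀}

theorem descentEquiv_tmul_smul
    (he : ∀ (x y : R') (a : A₀) (v : M),
      (e ((x * y) ⊗ₜ[R] (a • v)) : U') = (x ⊗ₜ[R] (a : A) : R' ⊗[R] A) • (e (y ⊗ₜ[R] v) : U'))
    (x y : R') (a : A) (m : M × M) :
    letI := h.superModule (M := M)
    descentEquiv u hU' hu'01 hu'10 e ((x * y) ⊗ₜ (a • m))
      = (x ⊗ₜ[R] a : R' ⊗[R] A) • descentEquiv u hU' hu'01 hu'10 e (y ⊗ₜ m) := by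
  obtain ⟨⟨p, q⟩, rfl⟩ := h.evenOddEquiv.surjective a
  have hau : h.evenOddEquiv (p, q) * u = h.evenOddEquiv (h.unitSq * h.conj q, h.conj p) := by
    simpa [evenOddEquiv_apply] using h.evenOddEquiv_mul p q 0 1
  show descentEquiv u hU' hu'01 hu'10 e
    ((x * y) ⊗ₜ h.pairSMul (h.evenOddEquiv.symm (h.evenOddEquiv (p, q))) m) = _
  rw [LinearEquiv.symm_apply_apply, descentEquiv_tmul, descentEquiv_tmul, smul_add, ← mul_smul,
    Algebra.TensorProduct.tmul_mul_tmul, mul_one, hau, tmul_evenOddEquiv, tmul_evenOddEquiv]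
  simp only [pairSMul, tmul_add, map_add, Submodule.coe_add, he, add_smul, smul_add]
  simp only [mul_smul]
  abel

end IsSuperunit

theorem statement7_general
    (R : Type) [CommRing R] (R' : Type) [CommRing R'] [Algebra R R']
    (A : Type) [Ring A] [Algebra R A]
    (A₀ : Subalgebra R A) (u : Aˣ)
    -- `A = A₀ ⊕ A₀u` as `R`-modules
    (hA_compl : IsCompl (Subalgebra.toSubmodule A₀)
      ((Subalgebra.toSubmodule A₀).map (LinearMap.mulRight R (u : A))))
    -- `u·A₀ = A₀·u`
    (hA_swap : (Subalgebra.toSubmodule A₀).map (LinearMap.mulLeft R (u : A))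
      = (Subalgebra.toSubmodule A₀).map (LinearMap.mulRight R (u : A)))
    -- `u² ∈ A₀`
    (hu_sq : (u : A) * (u : A) ∈ A₀)
    -- `U'` is a module over `A' := R' ⊗[R] A`
    (U' : Type) [AddCommGroup U'] [Module R' U'] [Module (R' ⊗[R] A) U']
    [IsScalarTower R' (R' ⊗[R] A) U']
    (U'₀ U'₁ : Submodule R' U')
    -- `U' = U'₀ ⊕ U'₁`
    (hU'_compl : IsCompl U'₀ U'₁)
    -- `u'·U'₀ ⊆ U'₁` and `u'·U'₁ ⊆ U'₀`, where `u' := 1 ⊗ u`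
    (hu'01 : ∀ w ∈ U'₀, (((1 : R') ⊗ₜ[R] (u : A) : R' ⊗[R] A)) • w ∈ U'₁)
    (hu'10 : ∀ w ∈ U'₁, (((1 : R') ⊗ₜ[R] (u : A) : R' ⊗[R] A)) • w ∈ U'₀)
    -- hypothesis: `U'₀` descends to `R` as an `A₀`-module, i.e. there are an `A₀`-module `U₀`
    -- and an `A'₀`-linear isomorphism `R' ⊗[R] U₀ ≅ U'₀`
    (hdesc : ∃ (W : ModuleOverWitness R A₀) (e : (R' ⊗[R] W.carrier) ≃ₗ[R'] U'₀),
        ∀ (x y : R') (a : A₀) (v : W.carrier),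
          ((e ((x * y) ⊗ₜ[R] (a • v)) : U'₀) : U')
            = ((x ⊗ₜ[R] (a : A) : R' ⊗[R] A)) • ((e (y ⊗ₜ[R] v) : U'₀) : U')) :
    -- conclusion: `U'` descends to `R` as an `A`-supermodule, compatibly with the gradings
    ∃ (W : ModuleWitness R A) (V₀ V₁ : Submodule R W.carrier)
      (g : (R' ⊗[R] W.carrier) ≃ₗ[R'] U'),
      -- `V₀` and `V₁` are `A₀`-submodules of `U`
      (∀ a ∈ A₀, ∀ v ∈ V₀, a • v ∈ V₀) ∧
      (∀ a ∈ A₀, ∀ v ∈ V₁, a • v ∈ V₁) ∧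
      -- `U = V₀ ⊕ V₁`
      IsCompl V₀ V₁ ∧
      -- `u·V₀ ⊆ V₁` and `u·V₁ ⊆ V₀`
      (∀ v ∈ V₀, (u : A) • v ∈ V₁) ∧
      (∀ v ∈ V₁, (u : A) • v ∈ V₀) ∧
      -- `g` is an isomorphism of `A'`-modules `R' ⊗[R] U ≅ U'`
      (∀ (x y : R') (a : A) (v : W.carrier),
          g ((x * y) ⊗ₜ[R] (a • v)) = ((x ⊗ₜ[R] a : R' ⊗[R] A)) • g (y ⊗ₜ[R] v)) ∧
      -- `g` carries the image of `R' ⊗ V₀` onto `U'₀` and the image of `R' ⊗ V₁` onto `U'₁`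
      Submodule.map g.toLinearMap (V₀.baseChange R') = U'₀ ∧
      Submodule.map g.toLinearMap (V₁.baseChange R') = U'₁ := by
  obtain ⟨W, e, he⟩ := hdesc
  have h : IsSuperunit A₀ u := ⟨hA_compl, hA_swap, hu_sq⟩
  let := h.superModule (M := W.carrier)
  have := h.superModule_isScalarTower (M := W.carrier)
  exact ⟨⟨W.carrier × W.carrier⟩, LinearMap.range (LinearMap.inl R _ _),
    LinearMap.range (LinearMap.inr R _ _), descentEquiv u hU'_compl hu'01 hu'10 e,
    fun _ ha _ => h.coe_smul_mem_range_inl ha, fun _ ha _ => h.coe_smul_mem_range_inr ha,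
    LinearMap.isCompl_range_inl_inr, fun _ => h.unit_smul_mem_range_inr,
    fun _ => h.unit_smul_mem_range_inl, h.descentEquiv_tmul_smul hU'_compl hu'01 hu'10 he,
    Submodule.map_baseChange_range_eq _
      (descentEquiv_comp_baseChange_inl u hU'_compl hu'01 hu'10 e),
    Submodule.map_baseChange_range_eq _
      (descentEquiv_comp_baseChange_inr u hU'_compl hu'01 hu'10 e)⟩

theorem statement7
    (R : Type) [CommRing R] (R' : Type) [CommRing R'] [Algebra R R']
    (A : Type) [Ring A] [Algebra R A]
    (A₀ : Subalgebra R A) (u : Aˣ)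
    -- `A = A₀ ⊕ A₀u` as `R`-modules
    (hA_compl : IsCompl (Subalgebra.toSubmodule A₀)
      ((Subalgebra.toSubmodule A₀).map (LinearMap.mulRight R (u : A))))
    -- `u·A₀ = A₀·u`
    (hA_swap : (Subalgebra.toSubmodule A₀).map (LinearMap.mulLeft R (u : A))
      = (Subalgebra.toSubmodule A₀).map (LinearMap.mulRight R (u : A)))
    -- `u² ∈ A₀`
    (hu_sq : (u : A) * (u : A) ∈ A₀)
    -- `U'` is a module over `A' := R' ⊗[R] A`
    (U' : Type) [AddCommGroup U'] [Module R' U'] [Module (R' ⊗[R] A) U']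
    [IsScalarTower R' (R' ⊗[R] A) U']
    -- `U'₀, U'₁` are `A'₀`-submodules of `U'`, where `A'₀` is the image of `R' ⊗ A₀` in `A'`
    (U'₀ U'₁ : Submodule R' U')
    (hU'₀ : ∀ z ∈ (Subalgebra.toSubmodule A₀).baseChange R', ∀ w ∈ U'₀, z • w ∈ U'₀)
    (hU'₁ : ∀ z ∈ (Subalgebra.toSubmodule A₀).baseChange R', ∀ w ∈ U'₁, z • w ∈ U'₁)
    -- `U' = U'₀ ⊕ U'₁`
    (hU'_compl : IsCompl U'₀ U'₁)
    -- `u'·U'₀ ⊆ U'₁` and `u'·U'₁ ⊆ U'₀`, where `u' := 1 ⊗ u`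
    (hu'01 : ∀ w ∈ U'₀, (((1 : R') ⊗ₜ[R] (u : A) : R' ⊗[R] A)) • w ∈ U'₁)
    (hu'10 : ∀ w ∈ U'₁, (((1 : R') ⊗ₜ[R] (u : A) : R' ⊗[R] A)) • w ∈ U'₀)
    -- hypothesis: `U'₀` descends to `R` as an `A₀`-module, i.e. there are an `A₀`-module `U₀`
    -- and an `A'₀`-linear isomorphism `R' ⊗[R] U₀ ≅ U'₀`
    (hdesc : ∃ (W : ModuleOverWitness R A₀) (e : (R' ⊗[R] W.carrier) ≃ₗ[R'] U'₀),
        ∀ (x y : R') (a : A₀) (v : W.carrier),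
          ((e ((x * y) ⊗ₜ[R] (a • v)) : U'₀) : U')
            = ((x ⊗ₜ[R] (a : A) : R' ⊗[R] A)) • ((e (y ⊗ₜ[R] v) : U'₀) : U')) :
    -- conclusion: `U'` descends to `R` as an `A`-supermodule, compatibly with the gradings
    ∃ (W : ModuleWitness R A) (V₀ V₁ : Submodule R W.carrier)
      (g : (R' ⊗[R] W.carrier) ≃ₗ[R'] U'),
      -- `V₀` and `V₁` are `A₀`-submodules of `U`
      (∀ a ∈ A₀, ∀ v ∈ V₀, a • v ∈ V₀) ∧
      (∀ a ∈ A₀, ∀ v ∈ V₁, a • v ∈ V₁) ∧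
      -- `U = V₀ ⊕ V₁`
      IsCompl V₀ V₁ ∧
      -- `u·V₀ ⊆ V₁` and `u·V₁ ⊆ V₀`
      (∀ v ∈ V₀, (u : A) • v ∈ V₁) ∧
      (∀ v ∈ V₁, (u : A) • v ∈ V₀) ∧
      -- `g` is an isomorphism of `A'`-modules `R' ⊗[R] U ≅ U'`
      (∀ (x y : R') (a : A) (v : W.carrier),
          g ((x * y) ⊗ₜ[R] (a • v)) = ((x ⊗ₜ[R] a : R' ⊗[R] A)) • g (y ⊗ₜ[R] v)) ∧
      -- `g` carries the image of `R' ⊗ V₀` onto `U'₀` and the image of `R' ⊗ V₁` onto `U'₁`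
      Submodule.map g.toLinearMap (V₀.baseChange R') = U'₀ ∧
      Submodule.map g.toLinearMap (V₁.baseChange R') = U'₁ :=
  statement7_general R R' A A₀ u hA_compl hA_swap hu_sq U' U'₀ U'₁ hU'_compl hu'01 hu'10 hdesc
end
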